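/- arXiv:2211.08382 — 2 statements merged into one kernel-verified Lean document; each statement's English description precedes it below -/
import Mathlib

section
/- Fix integers a, b ≥ 1 and let M₁₁, M₁₂, M₂₁, M₂₂ ∈ ℤ[q] be the rank-matrix entries of the oriented box poset B_{a×b}, defined combinatorially below. Let B be the 2×2 matrix with these entries and let U = [[q,1],[0,1]]. Then for every s ≥ 1 and every tuple d = (d_1,…,d_s) of natural numbers, the polynomial trace(U^{d_1}·B·U^{d_2}·B···U^{d_s}·B) is N-palindromic, where N = d_1 + … + d_s + s·a·b; that is, its natDegree is at most N and its coefficient of q^j equals its coefficient of q^{N−j} for all 0 ≤ j ≤ N. -/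
open Polynomial

/-- A polynomial `p ∈ ℤ[q]` is `N`-palindromic if `natDegree p ≤ N` and
`coeff j = coeff (N - j)` for all `0 ≤ j ≤ N`. -/
def IsPalindromic (p : Polynomial ℤ) (d : ℕ) : Prop :=
  p.natDegree ≤ d ∧ ∀ j ≤ d, p.coeff j = p.coeff (d - j)

/-- The lower sets of the box poset `Fin a × Fin b` with the componentwise order. -/
def boxLowerSets (a b : ℕ) : Finset (Finset (Fin a × Fin b)) :=
  Finset.univ.filter (fun I =>
    ∀ p ∈ I, ∀ p' : Fin a × Fin b, p'.1 ≤ p.1 → p'.2 ≤ p.2 → p' ∈ I)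

/-- Partial rank polynomial of the box poset: `∑ q^|I|` over lower sets `I`
satisfying the constraint `P`. -/
noncomputable def boxEntry (a b : ℕ) (P : Finset (Fin a × Fin b) → Prop)
    [DecidablePred P] : Polynomial ℤ :=
  ∑ I ∈ (boxLowerSets a b).filter P, X ^ I.card


/-!
Write `rev_N p = q^N p(1/q)` and `G = !![0, 1; 1, -1]`. The half-turn rotation of the
complement of a lower set of the box is a lower set of size `ab - |I|`, and it swaps the
corners `x_L` and `x_R`; this turns the entrywise reflection of the rank matrix `B` into
`G⁻¹ Bᵀ G`, and the same holds for `U`. Reflection is multiplicative under degree bounds, so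
reflecting a word `U^{d₁} B ⋯ U^{d_s} B` transposes it, reverses it and conjugates it by `G`:
the reflected trace is the trace of the reversed word. Finally, the trace of a word in two
`2 × 2` matrices `A, B` is invariant under reversal, because `J [A, B]` intertwines `A, B`
with `Aᵀ, Bᵀ`, and for generic `A, B` its determinant is nonzero.
-/
open Polynomial Matrix

theorem Polynomial.reflect_sum {R ι : Type*} [Semiring R] (s : Finset ι) (f : ι → R[X])
    (N : ℕ) : reflect N (∑ i ∈ s, f i) = ∑ i ∈ s, reflect N (f i) := by
  ext
  simp

theorem isPalindromic_of_reflect_eq {p : ℤ[X]} {N : ℕ} (hp : p.natDegree ≤ N)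
    (h : reflect N p = p) : IsPalindromic p N :=
  ⟨hp, fun j hj => by rw [← revAt_le hj, ← coeff_reflect, h]⟩

section MatrixReflect

variable {n ι R : Type*} [Fintype n] [Semiring R]

theorem trace_map_reflect (N : ℕ) (M : Matrix n n R[X]) :
    (M.map (reflect N)).trace = reflect N M.trace := by
  simp [Matrix.trace, reflect_sum]

theorem natDegree_mul_apply_le {M M' : Matrix n n R[X]} {m m' : ℕ}
    (hM : ∀ i j, (M i j).natDegree ≤ m) (hM' : ∀ i j, (M' i j).natDegree ≤ m') (i j : n) :
    ((M * M') i j).natDegree ≤ m + m' :=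
  natDegree_sum_le_of_forall_le _ _ fun k _ =>
    natDegree_mul_le.trans (add_le_add (hM i k) (hM' k j))

theorem map_reflect_mul {M M' : Matrix n n R[X]} {m m' : ℕ}
    (hM : ∀ i j, (M i j).natDegree ≤ m) (hM' : ∀ i j, (M' i j).natDegree ≤ m') :
    (M * M').map (reflect (m + m')) = M.map (reflect m) * M'.map (reflect m') := by
  ext i j : 1
  simp only [map_apply, mul_apply, reflect_sum]
  exact Finset.sum_congr rfl fun k _ => reflect_mul _ _ (hM i k) (hM' k j)

variable [DecidableEq n] (f : ι → Matrix n n R[X]) (deg : ι → ℕ)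

theorem natDegree_list_prod_apply_le (hf : ∀ k i j, (f k i j).natDegree ≤ deg k)
    (w : List ι) (i j : n) : ((w.map f).prod i j).natDegree ≤ (w.map deg).sum := by
  induction w generalizing i j with
  | nil => by_cases h : i = j <;> simp [one_apply, h]
  | cons k w ih => exact natDegree_mul_apply_le (hf k) ih i j

theorem map_reflect_list_prod (hf : ∀ k i j, (f k i j).natDegree ≤ deg k) (w : List ι) :
    (w.map f).prod.map (reflect (w.map deg).sum)
      = (w.map fun k => (f k).map (reflect (deg k))).prod := by
  induction w with
  | nil => simpa using Matrix.map_one (reflect 0) reflect_zero (by simp [reflect_one])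
  | cons k w ih =>
    simp only [List.map_cons, List.prod_cons, List.sum_cons]
    rw [map_reflect_mul (hf k) (natDegree_list_prod_apply_le f deg hf w), ih]

end MatrixReflect

section TraceReversal

variable {n ι R : Type*} [Fintype n] [DecidableEq n]

theorem mul_list_prod_eq_transpose_mul [CommSemiring R] {S : Matrix n n R}
    {f g : ι → Matrix n n R} {w : List ι} (h : ∀ k ∈ w, S * f k = (g k)ᵀ * S) :
    S * (w.map f).prod = (w.reverse.map g).prodᵀ * S := by
  induction w with
  | nil => simp
  | cons k w ih =>
    rw [List.map_cons, List.prod_cons, ← mul_assoc, h k List.mem_cons_self, mul_assoc,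
      ih fun k hk => h k (List.mem_cons_of_mem _ hk), List.reverse_cons, List.map_append,
      List.prod_append, List.map_singleton, List.prod_singleton, transpose_mul, mul_assoc]

theorem trace_list_prod_eq_of_mul_eq_transpose_mul [CommRing R] {S : Matrix n n R}
    (hS : IsLeftRegular S.det) {f g : ι → Matrix n n R} {w : List ι}
    (h : ∀ k ∈ w, S * f k = (g k)ᵀ * S) :
    (w.map f).prod.trace = (w.reverse.map g).prod.trace := by
  apply hS
  calc S.det * (w.map f).prod.trace
      = (S * (w.map f).prod * S.adjugate).trace := by
        rw [mul_assoc, trace_mul_comm, mul_assoc, adjugate_mul, Matrix.mul_smul, mul_one,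
          trace_smul, smul_eq_mul]
    _ = ((w.reverse.map g).prodᵀ * (S * S.adjugate)).trace := by
        rw [mul_list_prod_eq_transpose_mul h, mul_assoc]
    _ = S.det * (w.reverse.map g).prod.trace := by
        rw [mul_adjugate, Matrix.mul_smul, mul_one, trace_smul, trace_transpose, smul_eq_mul]

end TraceReversal

section FinTwo

variable {R : Type*} [CommRing R]

def twist (E : Fin 2 → Matrix (Fin 2) (Fin 2) R) : Matrix (Fin 2) (Fin 2) R :=
  !![0, 1; -1, 0] * (E 0 * E 1 - E 1 * E 0)

/- With `A = E 0`, `B = E 1`, `J = !![0, 1; -1, 0]`: since `J Mᵀ J⁻¹ = adj M = tr M - M`,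
the claim for `A` reads `[A, B] A + A [A, B] = tr A • [A, B]`, which is Cayley–Hamilton for `A`;
likewise for `B`. -/
theorem twist_mul_eq_transpose_mul (E : Fin 2 → Matrix (Fin 2) (Fin 2) R) (k : Fin 2) :
    twist E * E k = (E k)ᵀ * twist E := by
  rw [twist, eta_fin_two (E 0), eta_fin_two (E 1)]
  fin_cases k <;> ext i j <;> fin_cases i <;> fin_cases j <;>
    simp [mul_apply, Fin.sum_univ_two] <;> ring

theorem RingHom.mapMatrix_twist {S : Type*} [CommRing S] (f : R →+* S)
    (E : Fin 2 → Matrix (Fin 2) (Fin 2) R) :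
    f.mapMatrix (twist E) = twist fun k => f.mapMatrix (E k) := by
  rw [twist, twist, map_mul, map_sub, map_mul, map_mul]
  congr 1
  ext i j
  fin_cases i <;> fin_cases j <;> simp

noncomputable def genericPair :
    Fin 2 → Matrix (Fin 2) (Fin 2) (MvPolynomial (Fin 2 × Fin 2 × Fin 2) ℤ) :=
  fun k => of fun i j => MvPolynomial.X (k, i, j)

noncomputable def genericPairEval (E : Fin 2 → Matrix (Fin 2) (Fin 2) R) :
    MvPolynomial (Fin 2 × Fin 2 × Fin 2) ℤ →+* R :=
  MvPolynomial.eval₂Hom (Int.castRingHom R) fun v => E v.1 v.2.1 v.2.2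

theorem mapMatrix_genericPair (E : Fin 2 → Matrix (Fin 2) (Fin 2) R) (k : Fin 2) :
    (genericPairEval E).mapMatrix (genericPair k) = E k := by
  ext i j
  simp [genericPairEval, genericPair]

theorem twist_genericPair_det_ne_zero : (twist genericPair).det ≠ 0 := by
  intro h
  have := congrArg (genericPairEval (R := ℤ) ![!![1, 0; 0, 0], !![0, 1; 1, 0]]) h
  rw [RingHom.map_det, RingHom.mapMatrix_twist] at this
  simp only [mapMatrix_genericPair, map_zero] at this
  simp [twist, det_fin_two] at this

theorem trace_list_prod_reverse_fin_two (E : Fin 2 → Matrix (Fin 2) (Fin 2) R)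
    (w : List (Fin 2)) : (w.map E).prod.trace = (w.reverse.map E).prod.trace := by
  have hgeneric : (w.map genericPair).prod.trace = (w.reverse.map genericPair).prod.trace :=
    trace_list_prod_eq_of_mul_eq_transpose_mul
      (IsRegular.of_ne_zero twist_genericPair_det_ne_zero).left
      fun k _ => twist_mul_eq_transpose_mul genericPair k
  have hspec : ∀ v : List (Fin 2),
      (v.map E).prod.trace = genericPairEval E (v.map genericPair).prod.trace := by
    intro v
    rw [AddMonoidHom.map_trace, ← RingHom.mapMatrix_apply, map_list_prod, List.map_map]
    simp only [Function.comp_def, mapMatrix_genericPair]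
  rw [hspec, hspec, hgeneric]

end FinTwo

theorem isPalindromic_trace_list_prod (E : Fin 2 → Matrix (Fin 2) (Fin 2) ℤ[X])
    (deg : Fin 2 → ℕ) (hdeg : ∀ k i j, (E k i j).natDegree ≤ deg k)
    {F : Matrix (Fin 2) (Fin 2) ℤ[X]} (hF : IsLeftRegular F.det)
    (hFE : ∀ k, F * (E k).map (reflect (deg k)) = (E k)ᵀ * F) (w : List (Fin 2)) :
    IsPalindromic (w.map E).prod.trace (w.map deg).sum := by
  refine isPalindromic_of_reflect_eq ?_ ?_
  · exact natDegree_sum_le_of_forall_le _ _ fun i _ =>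
      natDegree_list_prod_apply_le E deg hdeg w i i
  · rw [← trace_map_reflect, map_reflect_list_prod E deg hdeg,
      trace_list_prod_eq_of_mul_eq_transpose_mul hF fun k _ => hFE k,
      ← trace_list_prod_reverse_fin_two]

def chainWord (l : List ℕ) : List (Fin 2) :=
  l.flatMap fun e => List.replicate e 0 ++ [1]

theorem prod_map_chainWord {M : Type*} [Monoid M] (E : Fin 2 → M) (l : List ℕ) :
    ((chainWord l).map E).prod = (l.map fun e => E 0 ^ e * E 1).prod := by
  induction l with
  | nil => rfl
  | cons e l ih => simp [chainWord, List.flatMap_cons, ← ih, mul_assoc]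

theorem sum_map_chainWord (deg : Fin 2 → ℕ) (l : List ℕ) :
    ((chainWord l).map deg).sum = deg 0 * l.sum + l.length * deg 1 := by
  induction l with
  | nil => simp [chainWord]
  | cons e l ih =>
    simp only [chainWord, List.flatMap_cons, List.map_append, List.sum_append] at ih ⊢
    simp [ih]
    ring

section Box

variable {a b : ℕ}

def boxRot (a b : ℕ) : Equiv.Perm (Fin a × Fin b) :=
  Fin.revPerm.prodCongr Fin.revPerm

theorem boxRot_apply (z : Fin a × Fin b) : boxRot a b z = (z.1.rev, z.2.rev) := rfl

theorem boxRot_boxRot (z : Fin a × Fin b) : boxRot a b (boxRot a b z) = z := by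
  simp [boxRot_apply]

def boxDual (I : Finset (Fin a × Fin b)) : Finset (Fin a × Fin b) :=
  Iᶜ.map (boxRot a b).toEmbedding

theorem mem_boxDual {I : Finset (Fin a × Fin b)} {z : Fin a × Fin b} :
    z ∈ boxDual I ↔ boxRot a b z ∉ I := by
  rw [boxDual, Finset.mem_map_equiv, Finset.mem_compl]
  rfl

theorem card_boxDual (I : Finset (Fin a × Fin b)) : (boxDual I).card = a * b - I.card := by
  simp [boxDual, Finset.card_compl]

theorem boxDual_boxDual (I : Finset (Fin a × Fin b)) : boxDual (boxDual I) = I := by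
  ext z
  simp [mem_boxDual, boxRot_boxRot]

theorem boxDual_mem_boxLowerSets {I : Finset (Fin a × Fin b)} (hI : I ∈ boxLowerSets a b) :
    boxDual I ∈ boxLowerSets a b := by
  simp only [boxLowerSets, Finset.mem_filter, Finset.mem_univ, true_and, mem_boxDual] at hI ⊢
  exact fun p hp p' h₁ h₂ hp' =>
    hp (hI _ hp' _ (Fin.rev_le_rev.mpr h₁) (Fin.rev_le_rev.mpr h₂))

theorem card_le_box (I : Finset (Fin a × Fin b)) : I.card ≤ a * b := by
  simpa using Finset.card_le_univ I

theorem natDegree_boxEntry_le (P : Finset (Fin a × Fin b) → Prop) [DecidablePred P] :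
    (boxEntry a b P).natDegree ≤ a * b :=
  natDegree_sum_le_of_forall_le _ _ fun I _ => by
    rw [natDegree_X_pow]
    exact card_le_box I

theorem reflect_boxEntry (P : Finset (Fin a × Fin b) → Prop) [DecidablePred P] :
    reflect (a * b) (boxEntry a b P) = boxEntry a b fun I => P (boxDual I) := by
  rw [boxEntry, boxEntry, reflect_sum]
  refine Finset.sum_nbij' boxDual boxDual ?_ ?_ (fun I _ => boxDual_boxDual I)
    (fun I _ => boxDual_boxDual I) fun I _ => ?_
  · intro I hI
    rw [Finset.mem_filter] at hI ⊢
    exact ⟨boxDual_mem_boxLowerSets hI.1, by rw [boxDual_boxDual]; exact hI.2⟩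
  · intro I hI
    rw [Finset.mem_filter] at hI ⊢
    exact ⟨boxDual_mem_boxLowerSets hI.1, hI.2⟩
  · rw [reflect_monomial, revAt_le (card_le_box I), card_boxDual]

theorem boxEntry_congr {P Q : Finset (Fin a × Fin b) → Prop} [DecidablePred P]
    [DecidablePred Q] (h : ∀ I, P I ↔ Q I) : boxEntry a b P = boxEntry a b Q := by
  simp only [boxEntry, h]

theorem boxEntry_and_add_boxEntry_and_not (P Q : Finset (Fin a × Fin b) → Prop)
    [DecidablePred P] [DecidablePred Q] :
    boxEntry a b (fun I => P I ∧ Q I) + boxEntry a b (fun I => P I ∧ ¬Q I)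
      = boxEntry a b P := by
  rw [boxEntry, boxEntry, boxEntry, ← Finset.filter_filter, ← Finset.filter_filter]
  exact Finset.sum_filter_add_sum_filter_not _ _ _

end Box

noncomputable def boxRankMatrix (a b : ℕ) (xL xR : Fin a × Fin b) :
    Matrix (Fin 2) (Fin 2) ℤ[X] :=
  !![boxEntry a b (fun I => xR ∈ I), boxEntry a b (fun I => xR ∉ I);
     boxEntry a b (fun I => xR ∈ I ∧ xL ∉ I), boxEntry a b (fun I => xR ∉ I ∧ xL ∉ I)]

theorem boxRankMatrix_reflect {a b : ℕ} {xL xR : Fin a × Fin b} (h : boxRot a b xR = xL) :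
    !![0, 1; 1, -1] * (boxRankMatrix a b xL xR).map (reflect (a * b))
      = (boxRankMatrix a b xL xR)ᵀ * !![0, 1; 1, -1] := by
  have hL : boxRot a b xL = xR := h ▸ boxRot_boxRot xR
  have swap (P Q : Finset (Fin a × Fin b) → Prop) [DecidablePred P] [DecidablePred Q] :
      boxEntry a b (fun I => P I ∧ Q I) = boxEntry a b (fun I => Q I ∧ P I) :=
    boxEntry_congr fun _ => and_comm
  have split := boxEntry_and_add_boxEntry_and_not (a := a) (b := b)
  ext i j : 1
  fin_cases i <;> fin_cases j <;>
    simp [boxRankMatrix, mul_apply, Fin.sum_univ_two, reflect_boxEntry, mem_boxDual, h, hL]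
  · exact swap _ _
  · linear_combination swap (xL ∈ ·) (xR ∈ ·) + split (xR ∈ ·) (xL ∈ ·)
  · linear_combination swap (xL ∉ ·) (xR ∉ ·) - split (xL ∉ ·) (xR ∈ ·)
  · linear_combination swap (xL ∈ ·) (xR ∉ ·) - split (xL ∈ ·) (xR ∈ ·)
      + split (xR ∉ ·) (xL ∈ ·)

theorem upStep_reflect :
    !![0, 1; 1, -1] * (!![X, 1; 0, 1] : Matrix (Fin 2) (Fin 2) ℤ[X]).map (reflect 1)
      = !![X, 1; 0, 1]ᵀ * !![0, 1; 1, -1] := by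
  ext i j : 1
  fin_cases i <;> fin_cases j <;> simp [mul_apply, Fin.sum_univ_two, reflect_one]

/-- `tr(U^{d₁}·B·U^{d₂}·B···U^{d_s}·B)` is `N`-palindromic, where `B` is the
rank matrix of the oriented box poset `B_{a×b}`, `U = [[q,1],[0,1]]` and
`N = d₁ + … + d_s + s·a·b`. -/
theorem trace_chainlink_product_palindromic
    (a b : ℕ) (ha : 1 ≤ a) (hb : 1 ≤ b)
    (xL xR : Fin a × Fin b)
    (hxL : xL = (⟨a - 1, by omega⟩, ⟨0, by omega⟩))
    (hxR : xR = (⟨0, by omega⟩, ⟨b - 1, by omega⟩))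
    (B : Matrix (Fin 2) (Fin 2) (Polynomial ℤ))
    (hB : B = !![boxEntry a b (fun I => xR ∈ I),
                 boxEntry a b (fun I => xR ∉ I);
                 boxEntry a b (fun I => xR ∈ I ∧ xL ∉ I),
                 boxEntry a b (fun I => xR ∉ I ∧ xL ∉ I)])
    (U : Matrix (Fin 2) (Fin 2) (Polynomial ℤ)) (hU : U = !![X, 1; 0, 1])
    (s : ℕ) (d : Fin s → ℕ) :
    IsPalindromic ((List.ofFn fun i : Fin s => U ^ d i * B).prod.trace)
      ((∑ i, d i) + s * (a * b)) := by
  have hrot : boxRot a b xR = xL := by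
    subst hxL hxR
    ext <;> simp [boxRot_apply]
    omega
  have hdeg : ∀ k i j, (![U, B] k i j).natDegree ≤ ![1, a * b] k := by
    subst hU hB
    intro k i j
    fin_cases k <;> fin_cases i <;> fin_cases j <;> simp [natDegree_boxEntry_le]
  have hFE : ∀ k, !![0, 1; 1, -1] * (![U, B] k).map (reflect (![1, a * b] k))
      = (![U, B] k)ᵀ * !![0, 1; 1, -1] := by
    subst hU hB
    intro k
    fin_cases k
    · exact upStep_reflect
    · exact boxRankMatrix_reflect hrot
  have hF : IsLeftRegular (!![0, 1; 1, -1] : Matrix (Fin 2) (Fin 2) ℤ[X]).det := by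
    simpa [det_fin_two] using isUnit_one.neg.isRegular
  have hword := isPalindromic_trace_list_prod ![U, B] ![1, a * b] hdeg hF hFE
    (chainWord (List.ofFn d))
  simpa [prod_map_chainWord, sum_map_chainWord, List.map_ofFn, Function.comp_def,
    List.sum_ofFn] using hword
end

section
/- Let s ≥ 1, let a : Fin s → ℝ with a i > 0 for all i, and let l be a real number with 0 ≤ l and 2l ≤ a i for all i. Suppose E ⊆ ℝ^s is an extreme subset of the chainlink polytope CL(ā,l) (i.e., IsExtreme ℝ CL(ā,l) E) and E equals the closed segment [u,v] for some u ≠ v (an edge of the polytope). Then there exist an index i ∈ Fin s and a nonzero real scalar c such that v − u = c·e_i or v − u = c·(e_i + e_{i+1 (mod s)}), where e_1,…,e_s are the standard basis vectors of ℝ^s. -/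
/-!
Let `m` be the midpoint of the edge `[u, v]`. If a direction `w` keeps every constraint that is
tight at `m` tight, then `m ± t • w` stays in the polytope for small `t`, so extremality of
`[u, v]` makes `w` parallel to `v - u`; and `v - u` is itself such a direction. Since `2l ≤ aⱼ`,
the two link constraints through a coordinate `j` with `vⱼ ≠ uⱼ` cannot both be tight at `m`.
Hence some `j` has `eⱼ` (if the link `j, j+1` is slack) or `eⱼ + e_{j+1}` (if it is tight) as
such a direction.
-/

/-- The chainlink polytope `CL(ā,l) ⊆ ℝ^s` (indices taken cyclically). -/
def chainlink (s : ℕ) [NeZero s] (a : Fin s → ℝ) (l : ℝ) : Set (Fin s → ℝ) :=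
  {x | (∀ i, 0 ≤ x i ∧ x i ≤ a i) ∧ ∀ i, x i - x (i + 1) ≤ a i - l}

open Filter Topology

theorem IsExtreme.exists_eq_smul_sub_of_add_mem_of_sub_mem {𝕜 E : Type*} [Field 𝕜] [LinearOrder 𝕜]
    [IsStrictOrderedRing 𝕜] [AddCommGroup E] [Module 𝕜 E] {C : Set E} {u v z w : E}
    (h : IsExtreme 𝕜 C (segment 𝕜 u v)) (hz : z ∈ segment 𝕜 u v) (hadd : z + w ∈ C)
    (hsub : z - w ∈ C) : ∃ c : 𝕜, w = c • (v - u) := by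
  have hmem := h.left_mem_of_mem_openSegment hadd hsub hz (mem_openSegment_add_sub z w)
  rw [segment_eq_image'] at hz hmem
  obtain ⟨s, -, rfl⟩ := hz
  obtain ⟨t, -, ht⟩ := hmem
  exact ⟨t - s, by linear_combination (norm := module) -ht⟩

theorem eventually_add_mul_le {p q r : ℝ} (hpq : p ≤ q) (hr : p = q → r = 0) :
    ∀ᶠ t in 𝓝 (0 : ℝ), p + t * r ≤ q := by
  rcases hpq.eq_or_lt with rfl | hlt
  · exact .of_forall fun t => by simp [hr rfl]
  · have : Tendsto (fun t : ℝ => p + t * r) (𝓝 0) (𝓝 p) :=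
      (continuous_const.add (continuous_id.mul continuous_const)).tendsto' 0 p (by simp)
    exact (this.eventually (gt_mem_nhds hlt)).mono fun _ => le_of_lt

section Chainlink

variable {s : ℕ} [NeZero s] {a : Fin s → ℝ} {l : ℝ}

/-- `w` lies in the direction of the smallest face of `chainlink s a l` containing `x`. -/
def IsFaceDirection (a : Fin s → ℝ) (l : ℝ) (x w : Fin s → ℝ) : Prop :=
  (∀ i, x i = 0 ∨ x i = a i → w i = 0) ∧ ∀ i, x i - x (i + 1) = a i - l → w i = w (i + 1)

theorem IsFaceDirection.eventually_add_smul_mem {x w : Fin s → ℝ} (hx : x ∈ chainlink s a l)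
    (hw : IsFaceDirection a l x w) : ∀ᶠ t in 𝓝 (0 : ℝ), x + t • w ∈ chainlink s a l := by
  have hbox : ∀ i, ∀ᶠ t in 𝓝 (0 : ℝ), 0 ≤ x i + t * w i ∧ x i + t * w i ≤ a i := fun i =>
    have hlow := eventually_add_mul_le (r := -w i) (neg_nonpos.2 (hx.1 i).1)
      (fun h => by rw [hw.1 i (.inl (neg_eq_zero.1 h)), neg_zero])
    (hlow.and (eventually_add_mul_le (hx.1 i).2 (fun h => hw.1 i (.inr h)))).mono
      fun t ht => ⟨by linarith [ht.1], ht.2⟩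
  have hlink : ∀ i, ∀ᶠ t in 𝓝 (0 : ℝ), (x i + t * w i) - (x (i + 1) + t * w (i + 1)) ≤ a i - l :=
    fun i => (eventually_add_mul_le (hx.2 i) (fun h => sub_eq_zero.2 (hw.2 i h))).mono
      fun t ht => by linarith
  filter_upwards [eventually_all.2 hbox, eventually_all.2 hlink] with t hb hc
  exact ⟨hb, hc⟩

theorem IsFaceDirection.exists_sub_eq_smul {u v w : Fin s → ℝ}
    (hE : IsExtreme ℝ (chainlink s a l) (segment ℝ u v))
    (hw : IsFaceDirection a l (midpoint ℝ u v) w) (hw0 : w ≠ 0) :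
    ∃ c : ℝ, c ≠ 0 ∧ v - u = c • w := by
  have hm := midpoint_mem_segment (𝕜 := ℝ) u v
  have hmove : ∀ᶠ t in 𝓝[≠] (0 : ℝ), t ≠ 0 ∧ midpoint ℝ u v + t • w ∈ chainlink s a l ∧
      midpoint ℝ u v - t • w ∈ chainlink s a l := by
    have hev := hw.eventually_add_smul_mem (hE.subset hm)
    have hneg := (continuous_neg.tendsto' (0 : ℝ) 0 neg_zero).eventually hev
    filter_upwards [self_mem_nhdsWithin, nhdsWithin_le_nhds (hev.and hneg)] with t ht h
    exact ⟨ht, h.1, by simpa [neg_smul, ← sub_eq_add_neg] using h.2⟩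
  obtain ⟨t, ht, hadd, hsub⟩ := hmove.exists
  obtain ⟨c, hc⟩ := hE.exists_eq_smul_sub_of_add_mem_of_sub_mem hm hadd hsub
  have hc0 : c ≠ 0 := by
    rintro rfl
    exact hw0 ((smul_eq_zero.1 (hc.trans (zero_smul _ _))).resolve_left ht)
  exact ⟨c⁻¹ * t, mul_ne_zero (inv_ne_zero hc0) ht, by rw [mul_smul, hc, inv_smul_smul₀ hc0]⟩

theorem isFaceDirection_midpoint_sub {u v : Fin s → ℝ} (hu : u ∈ chainlink s a l)
    (hv : v ∈ chainlink s a l) : IsFaceDirection a l (midpoint ℝ u v) (v - u) := by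
  simp only [IsFaceDirection, pi_midpoint_apply, midpoint_eq_smul_add, invOf_eq_inv, smul_eq_mul,
    Pi.sub_apply]
  refine ⟨fun i hi => ?_, fun i hi => ?_⟩
  · have := hu.1 i; have := hv.1 i
    rcases hi with hi | hi <;> linarith
  · have := hu.2 i; have := hv.2 i
    linarith

theorem IsFaceDirection.not_tight_pred_and_tight {x d : Fin s → ℝ} (hx : x ∈ chainlink s a l)
    (hd : IsFaceDirection a l x d) {j : Fin s} (hdj : d j ≠ 0) (h2l : 2 * l ≤ a j) :
    ¬(x (j - 1) - x j = a (j - 1) - l ∧ x j - x (j + 1) = a j - l) := by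
  rintro ⟨hprev, hcur⟩
  have hprev' : x (j - 1) - x (j - 1 + 1) = a (j - 1) - l := by rwa [sub_add_cancel]
  have hlt : x (j - 1) < a (j - 1) := (hx.1 _).2.lt_of_ne fun h =>
    hdj (by rw [← sub_add_cancel j 1, ← hd.2 _ hprev', hd.1 _ (.inr h)])
  have hpos : 0 < x (j + 1) := (hx.1 _).1.lt_of_ne' fun h =>
    hdj (by rw [hd.2 _ hcur, hd.1 _ (.inl h)])
  linarith

theorem isFaceDirection_single {x : Fin s → ℝ} {j : Fin s} (hj : ¬(x j = 0 ∨ x j = a j))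
    (hprev : x (j - 1) - x j ≠ a (j - 1) - l) (hcur : x j - x (j + 1) ≠ a j - l) :
    IsFaceDirection a l x (Pi.single j 1) := by
  refine ⟨fun i hi => Pi.single_eq_of_ne (by rintro rfl; exact hj hi) _, fun i hi => ?_⟩
  have hij : i ≠ j := by rintro rfl; exact hcur hi
  have hij' : i + 1 ≠ j := by rintro rfl; exact hprev (by rwa [add_sub_cancel_right])
  rw [Pi.single_eq_of_ne hij, Pi.single_eq_of_ne hij']

theorem isFaceDirection_single_add_single {x : Fin s → ℝ} {j : Fin s}
    (hj : ¬(x j = 0 ∨ x j = a j)) (hj' : ¬(x (j + 1) = 0 ∨ x (j + 1) = a (j + 1)))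
    (hprev : x (j - 1) - x j ≠ a (j - 1) - l) (hnext : x (j + 1) - x (j + 1 + 1) ≠ a (j + 1) - l) :
    IsFaceDirection a l x (Pi.single j 1 + Pi.single (j + 1) 1) := by
  refine ⟨fun i hi => ?_, fun i hi => ?_⟩
  · rw [Pi.add_apply, Pi.single_eq_of_ne (by rintro rfl; exact hj hi),
      Pi.single_eq_of_ne (by rintro rfl; exact hj' hi), add_zero]
  · by_cases hij : i = j
    · subst hij
      simp only [Pi.add_apply, Pi.single_apply, eq_comm (a := i + 1)]
      ring
    have hij₁ : i ≠ j + 1 := by rintro rfl; exact hnext hi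
    have hij₂ : i + 1 ≠ j := by rintro rfl; exact hprev (by rwa [add_sub_cancel_right])
    have hij₃ : i + 1 ≠ j + 1 := fun h => hij (add_right_cancel h)
    simp only [Pi.add_apply, Pi.single_eq_of_ne hij, Pi.single_eq_of_ne hij₁,
      Pi.single_eq_of_ne hij₂, Pi.single_eq_of_ne hij₃]

theorem IsFaceDirection.exists_isFaceDirection_single {x d : Fin s → ℝ}
    (hx : x ∈ chainlink s a l) (hd : IsFaceDirection a l x d) (hd0 : d ≠ 0)
    (h2l : ∀ i, 2 * l ≤ a i) : ∃ j, IsFaceDirection a l x (Pi.single j 1) ∨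
      IsFaceDirection a l x (Pi.single j 1 + Pi.single (j + 1) 1) := by
  obtain ⟨j, hdj, hprev⟩ : ∃ j, d j ≠ 0 ∧ x (j - 1) - x j ≠ a (j - 1) - l := by
    obtain ⟨i, hi⟩ := Function.ne_iff.1 hd0
    by_cases h : x (i - 1) - x i = a (i - 1) - l
    · have hd' : d (i - 1) = d i := by
        simpa only [sub_add_cancel] using hd.2 (i - 1) (by rwa [sub_add_cancel])
      refine ⟨i - 1, hd' ▸ hi, fun h' => ?_⟩
      exact hd.not_tight_pred_and_tight hx (hd' ▸ hi) (h2l _) ⟨h', by rwa [sub_add_cancel]⟩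
    · exact ⟨i, hi, h⟩
  have hj : ¬(x j = 0 ∨ x j = a j) := fun h => hdj (hd.1 j h)
  refine ⟨j, ?_⟩
  by_cases hcur : x j - x (j + 1) = a j - l
  · have hdj' : d (j + 1) ≠ 0 := hd.2 j hcur ▸ hdj
    refine .inr (isFaceDirection_single_add_single hj (fun h => hdj' (hd.1 _ h)) hprev ?_)
    exact fun h => hd.not_tight_pred_and_tight hx hdj' (h2l _) ⟨by rwa [add_sub_cancel_right], h⟩
  · exact .inl (isFaceDirection_single hj hprev hcur)

end Chainlink

theorem chainlink_edges_directions_general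
    (s : ℕ) [NeZero s] (a : Fin s → ℝ)
    (l : ℝ) (h2l : ∀ i, 2 * l ≤ a i)
    (E : Set (Fin s → ℝ)) (hE : IsExtreme ℝ (chainlink s a l) E)
    (u v : Fin s → ℝ) (huv : u ≠ v) (hseg : E = segment ℝ u v) :
    ∃ (i : Fin s) (c : ℝ), c ≠ 0 ∧
      (v - u = c • (Pi.single i 1 : Fin s → ℝ) ∨
       v - u = c • ((Pi.single i 1 : Fin s → ℝ) + Pi.single (i + 1) 1)) := by
  subst hseg
  have hd := isFaceDirection_midpoint_sub (hE.subset (left_mem_segment ℝ u v))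
    (hE.subset (right_mem_segment ℝ u v))
  obtain ⟨j, hj | hj⟩ := hd.exists_isFaceDirection_single (hE.subset (midpoint_mem_segment u v))
    (sub_ne_zero.2 huv.symm) h2l
  · obtain ⟨c, hc0, hc⟩ := hj.exists_sub_eq_smul hE (by simp)
    exact ⟨j, c, hc0, .inl hc⟩
  · have hw0 : (Pi.single j 1 + Pi.single (j + 1) 1 : Fin s → ℝ) ≠ 0 := fun h => by
      have hj := congrFun h j
      rw [Pi.add_apply, Pi.single_eq_same, Pi.single_apply] at hj
      split_ifs at hj <;> norm_num at hj
    obtain ⟨c, hc0, hc⟩ := hj.exists_sub_eq_smul hE hw0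
    exact ⟨j, c, hc0, .inr hc⟩

/-- every edge of the chainlink polytope (an extreme subset that is a
closed segment between two distinct points) is parallel to a standard basis vector
`eᵢ` or to `eᵢ + e_{i+1}`, provided `2l ≤ aᵢ` for all `i`. -/
theorem chainlink_edges_directions
    (s : ℕ) [NeZero s] (a : Fin s → ℝ) (ha : ∀ i, 0 < a i)
    (l : ℝ) (hl : 0 ≤ l) (h2l : ∀ i, 2 * l ≤ a i)
    (E : Set (Fin s → ℝ)) (hE : IsExtreme ℝ (chainlink s a l) E)
    (u v : Fin s → ℝ) (huv : u ≠ v) (hseg : E = segment ℝ u v) :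
    ∃ (i : Fin s) (c : ℝ), c ≠ 0 ∧
      (v - u = c • (Pi.single i 1 : Fin s → ℝ) ∨
       v - u = c • ((Pi.single i 1 : Fin s → ℝ) + Pi.single (i + 1) 1)) :=
  chainlink_edges_directions_general s a l h2l E hE u v huv hseg
end
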